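/- Let n ≥ 1, ℓ ≥ 1, and let Q : ℝⁿ → ℝⁿ be smooth. Let C be a second-order Killing tensor of ℝⁿ, G : ℝⁿ → ℝ smooth, and for each odd M ∈ {1, 3, …, 2ℓ−1} let L_{(M)} : ℝⁿ → ℝⁿ be a smooth vector field whose symmetrized Jacobian S_{(M)ab} = ½(∂L_{(M)a}/∂q^b + ∂L_{(M)b}/∂q^a) is a second-order Killing tensor. Assume for all q and indices a: ∂(L_{(2ℓ−1)b} Q^b)/∂q^a = −2 S_{(2ℓ−1)ab} Q^b; for each even k with 2 ≤ k ≤ 2ℓ−2, ∂(L_{(k−1)b} Q^b)/∂q^a = −2 S_{(k−1)ab} Q^b − k(k+1) L_{(k+1)a}; and ∂G/∂q^a = 2 C_{ab} Q^b − L_{(1)a}. Then along every solution q(t) of q̈^a = −Q^a(q), the quantity I₍₁₎(t) = ( C_{ab} − Σ_{j=1}^{ℓ} (t^{2j}/(2j)) S_{(2j−1)ab} ) q̇^a q̇^b + Σ_{j=1}^{ℓ} t^{2j−1} L_{(2j−1)a} q̇^a + Σ_{j=1}^{ℓ} (t^{2j}/(2j)) L_{(2j−1)a} Q^a + G(q(t))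 is constant in t. -/

import Mathlib

/-- Spatial partial derivative `∂f/∂q^a` of a function `f : ℝⁿ → ℝ`. -/
noncomputable def dS {n : ℕ} (f : (Fin n → ℝ) → ℝ) (a : Fin n) (q : Fin n → ℝ) : ℝ :=
  deriv (fun s => f (Function.update q a s)) (q a)

/-- A second-order Killing tensor of the Euclidean space `ℝⁿ`: a smooth,
symmetric matrix-valued map `C_{ab}(q)` satisfying the Killing tensor equation
`C_{(ab,c)} = 0` (in Cartesian coordinates). -/
def IsKillingTensor {n : ℕ} (C : (Fin n → ℝ) → Fin n → Fin n → ℝ) : Prop :=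
  (∀ a b, ContDiff ℝ (⊤ : ℕ∞) (fun q => C q a b)) ∧
  (∀ q a b, C q a b = C q b a) ∧
  (∀ q, ∀ a b c : Fin n,
    dS (fun q => C q a b) c q + dS (fun q => C q b c) a q + dS (fun q => C q c a) b q = 0)

/-- The symmetrized Jacobian `L_{(a,b)} = ½(∂L_a/∂q^b + ∂L_b/∂q^a)` of a vector
field `L` on `ℝⁿ`. -/
noncomputable def SymJac {n : ℕ} (L : (Fin n → ℝ) → Fin n → ℝ)
    (q : Fin n → ℝ) (a b : Fin n) : ℝ :=
  (1 / 2) * (dS (fun q => L q a) b q + dS (fun q => L q b) a q)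

lemma hasDerivAt_update' {n : ℕ} (p : Fin n → ℝ) (c : Fin n) (s : ℝ) :
    HasDerivAt (fun y => Function.update p c y) (Pi.single c (1:ℝ)) s := by
  rw [hasDerivAt_pi]
  intro i
  rcases eq_or_ne i c with h | h
  · subst h
    simp only [Function.update_self, Pi.single_eq_same]
    exact hasDerivAt_id s
  · simp only [Function.update_of_ne h, Pi.single_eq_of_ne h]
    exact hasDerivAt_const s (p i)

lemma dS_eq_fderiv {n : ℕ} (f : (Fin n → ℝ) → ℝ) (p : Fin n → ℝ)
    (hf : DifferentiableAt ℝ f p) (c : Fin n) :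
    dS f c p = fderiv ℝ f p (Pi.single c 1) := by
  have h1 : HasFDerivAt f (fderiv ℝ f p) (Function.update p c (p c)) := by
    rw [Function.update_eq_self]; exact hf.hasFDerivAt
  have h := h1.comp_hasDerivAt (p c) (hasDerivAt_update' p c (p c))
  exact h.deriv

lemma chain_rule {n : ℕ} (f : (Fin n → ℝ) → ℝ) (q : ℝ → Fin n → ℝ) (t : ℝ)
    (v : Fin n → ℝ) (hf : DifferentiableAt ℝ f (q t)) (hq : HasDerivAt q v t) :
    HasDerivAt (fun s => f (q s)) (∑ c, dS f c (q t) * v c) t := by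
  have h := hf.hasFDerivAt.comp_hasDerivAt t hq
  have key : (fderiv ℝ f (q t)) v = ∑ c, dS f c (q t) * v c := by
    have hv : v = ∑ c, v c • (Pi.single c 1 : Fin n → ℝ) := by
      funext i
      simp [Finset.sum_apply, Pi.single_apply]
    conv_lhs => rw [hv]
    rw [map_sum]
    refine Finset.sum_congr rfl fun c _ => ?_
    rw [map_smul, dS_eq_fderiv f (q t) hf c, smul_eq_mul]
    ring
  exact key ▸ h

lemma sum3_cyc {n : ℕ} (f : Fin n → Fin n → Fin n → ℝ) :
    (∑ a, ∑ b, ∑ c, f a b c) = ∑ a, ∑ b, ∑ c, f c a b :=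
  Finset.sum_comm.trans (Finset.sum_congr rfl fun _ _ => Finset.sum_comm)

lemma kill_zero {n : ℕ} (w : Fin n → ℝ) (D : Fin n → Fin n → Fin n → ℝ)
    (hD : ∀ a b c, D a b c + D b c a + D c a b = 0) :
    (∑ a, ∑ b, ∑ c, D a b c * (w a * w b * w c)) = 0 := by
  have step : ∀ E : Fin n → Fin n → Fin n → ℝ,
      (∑ a, ∑ b, ∑ c, E a b c * (w a * w b * w c)) =
      ∑ a, ∑ b, ∑ c, E c a b * (w a * w b * w c) := by
    intro E
    rw [sum3_cyc (fun a b c => E a b c * (w a * w b * w c))]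
    exact Finset.sum_congr rfl fun a _ => Finset.sum_congr rfl fun b _ =>
      Finset.sum_congr rfl fun c _ => by ring
  have h1 := step D
  have h2 := step (fun a b c => D c a b)
  have h3 : (∑ a, ∑ b, ∑ c, (D a b c + D c a b + D b c a) * (w a * w b * w c)) = 0 :=
    Finset.sum_eq_zero fun a _ => Finset.sum_eq_zero fun b _ =>
      Finset.sum_eq_zero fun c _ => by
        have h := hD a b c
        have h' : D a b c + D c a b + D b c a = 0 := by linarith
        rw [h', zero_mul]
  have h4 : (∑ a, ∑ b, ∑ c, D a b c * (w a * w b * w c))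
      + (∑ a, ∑ b, ∑ c, D c a b * (w a * w b * w c))
      + (∑ a, ∑ b, ∑ c, D b c a * (w a * w b * w c)) = 0 := by
    rw [← h3]
    simp only [add_mul, Finset.sum_add_distrib]
  linarith

lemma sum_swap_out {n M : ℕ} (f : ℕ → Fin n → Fin n → ℝ) :
    (∑ a, ∑ b, ∑ j ∈ Finset.range M, f j a b) = ∑ j ∈ Finset.range M, ∑ a, ∑ b, f j a b :=
  (Finset.sum_congr rfl fun _ _ => Finset.sum_comm).trans Finset.sum_comm

lemma sum2_swap {n : ℕ} (f : Fin n → Fin n → ℝ) : (∑ a, ∑ b, f a b) = ∑ a, ∑ b, f b a :=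
  Finset.sum_comm

/-- The even-powers time-dependent quadratic first integral `I₍₁₎` of Theorem 3
for the system `q̈^a = −Q^a(q)`. -/
theorem even_powers_quadratic_first_integral
    (n ℓ : ℕ) (hn : 1 ≤ n) (hℓ : 1 ≤ ℓ)
    (Q : (Fin n → ℝ) → Fin n → ℝ) (hQ : ContDiff ℝ (⊤ : ℕ∞) Q)
    (C : (Fin n → ℝ) → Fin n → Fin n → ℝ) (hC : IsKillingTensor C)
    (G : (Fin n → ℝ) → ℝ) (hGsm : ContDiff ℝ (⊤ : ℕ∞) G)
    (L : ℕ → (Fin n → ℝ) → Fin n → ℝ)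
    -- for each odd `M = 2j+1 ∈ {1, 3, …, 2ℓ−1}`, `L_{(M)}` is a smooth vector
    -- field whose symmetrized Jacobian is a Killing tensor
    (hLsm : ∀ j < ℓ, ContDiff ℝ (⊤ : ℕ∞) (L (2 * j + 1)))
    (hLKT : ∀ j < ℓ, IsKillingTensor (SymJac (L (2 * j + 1))))
    -- `(L_{(2ℓ−1)b} Q^b)_{,a} = −2 S_{(2ℓ−1)ab} Q^b`
    (htop : ∀ q, ∀ a : Fin n,
      dS (fun q => ∑ b, L (2 * ℓ - 1) q b * Q q b) a q =
        -2 * ∑ b, SymJac (L (2 * ℓ - 1)) q a b * Q q b)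
    -- for each even `k` with `2 ≤ k ≤ 2ℓ−2`:
    -- `(L_{(k−1)b} Q^b)_{,a} = −2 S_{(k−1)ab} Q^b − k(k+1) L_{(k+1)a}`
    (hmid : ∀ k : ℕ, Even k → 2 ≤ k → k ≤ 2 * ℓ - 2 → ∀ q, ∀ a : Fin n,
      dS (fun q => ∑ b, L (k - 1) q b * Q q b) a q =
        -2 * (∑ b, SymJac (L (k - 1)) q a b * Q q b)
          - ((k * (k + 1) : ℕ) : ℝ) * L (k + 1) q a)
    -- `G_{,a} = 2 C_{ab} Q^b − L_{(1)a}`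
    (hG : ∀ q, ∀ a : Fin n, dS G a q = 2 * (∑ b, C q a b * Q q b) - L 1 q a)
    -- a solution of `q̈^a = −Q^a(q)`
    (q : ℝ → Fin n → ℝ) (hq : ContDiff ℝ (⊤ : ℕ∞) q)
    (hode : ∀ t, ∀ a : Fin n,
      deriv (fun s => deriv (fun u => q u a) s) t = -(Q (q t) a)) :
    -- `I₍₁₎` is constant in `t`
    ∃ cst : ℝ, ∀ t : ℝ,
      (∑ a, ∑ b,
          (C (q t) a b -
            ∑ j ∈ Finset.range ℓ,
              (t ^ (2 * (j + 1)) / ((2 * (j + 1) : ℕ) : ℝ)) * SymJac (L (2 * j + 1)) (q t) a b)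
          * deriv (fun u => q u a) t * deriv (fun u => q u b) t)
        + (∑ j ∈ Finset.range ℓ,
            t ^ (2 * j + 1) * ∑ a, L (2 * j + 1) (q t) a * deriv (fun u => q u a) t)
        + (∑ j ∈ Finset.range ℓ,
            (t ^ (2 * (j + 1)) / ((2 * (j + 1) : ℕ) : ℝ)) *
              ∑ a, L (2 * j + 1) (q t) a * Q (q t) a)
        + G (q t)
      = cst := by
  classical
  obtain ⟨m, rfl⟩ : ∃ m, ℓ = m + 1 := ⟨ℓ - 1, (Nat.succ_pred_eq_of_pos hℓ).symm⟩
  have hdiffAt : ∀ (g : (Fin n → ℝ) → ℝ), ContDiff ℝ (⊤ : ℕ∞) g → ∀ x, DifferentiableAt ℝ g x :=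
    fun g hg x => (hg.differentiable (by simp)).differentiableAt
  obtain ⟨w, hw⟩ : ∃ w : ℝ → Fin n → ℝ, ∀ s a, w s a = deriv (fun u => q u a) s :=
    ⟨_, fun _ _ => rfl⟩
  have hqc : ∀ a, ContDiff ℝ (⊤ : ℕ∞) (fun u => q u a) := fun a => contDiff_pi.mp hq a
  have hqd : ∀ s, HasDerivAt q (w s) s := by
    intro s
    rw [hasDerivAt_pi]
    intro a
    rw [hw]
    exact (((hqc a).differentiable (by simp)) s).hasDerivAt
  have hvd : ∀ s (a : Fin n), HasDerivAt (fun u => w u a) (-(Q (q s) a)) s := by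
    intro s a
    have hd : Differentiable ℝ (deriv (fun u => q u a)) := by
      have h0 : ContDiff ℝ ((⊤ : ℕ∞) : WithTop ℕ∞) (fun u => q u a) := (hqc a).of_le (by simp)
      exact ((contDiff_infty_iff_deriv.mp h0).2).differentiable (by simp)
    have h2 : deriv (deriv (fun u => q u a)) s = -(Q (q s) a) := hode s a
    have h := (hd s).hasDerivAt
    rw [h2] at h
    have h3 : (fun u => w u a) = deriv (fun u => q u a) := funext fun u => hw u a
    rw [h3]
    exact h
  have key : ∀ t, HasDerivAt (fun s =>
      (∑ a, ∑ b,
          (C (q s) a b -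
            ∑ j ∈ Finset.range (m + 1),
              (s ^ (2 * (j + 1)) / ((2 * (j + 1) : ℕ) : ℝ)) * SymJac (L (2 * j + 1)) (q s) a b)
          * w s a * w s b)
        + (∑ j ∈ Finset.range (m + 1),
            s ^ (2 * j + 1) * ∑ a, L (2 * j + 1) (q s) a * w s a)
        + (∑ j ∈ Finset.range (m + 1),
            (s ^ (2 * (j + 1)) / ((2 * (j + 1) : ℕ) : ℝ)) *
              ∑ a, L (2 * j + 1) (q s) a * Q (q s) a)
        + G (q s)) 0 t := by
    intro t
    have HC : ∀ a b : Fin n, HasDerivAt (fun s => C (q s) a b)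
        (∑ c, dS (fun y => C y a b) c (q t) * w t c) t :=
      fun a b => chain_rule _ q t (w t) (hdiffAt _ (hC.1 a b) _) (hqd t)
    have HS : ∀ j, j < (m + 1) → ∀ a b : Fin n,
        HasDerivAt (fun s => SymJac (L (2 * j + 1)) (q s) a b)
        (∑ c, dS (fun y => SymJac (L (2 * j + 1)) y a b) c (q t) * w t c) t :=
      fun j hj a b => chain_rule _ q t (w t) (hdiffAt _ ((hLKT j hj).1 a b) _) (hqd t)
    have HL : ∀ j, j < (m + 1) → ∀ a : Fin n, HasDerivAt (fun s => L (2 * j + 1) (q s) a)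
        (∑ c, dS (fun y => L (2 * j + 1) y a) c (q t) * w t c) t :=
      fun j hj a => chain_rule _ q t (w t) (hdiffAt _ (contDiff_pi.mp (hLsm j hj) a) _) (hqd t)
    have hgsm : ∀ j, j < (m + 1) → ContDiff ℝ (⊤ : ℕ∞) (fun y => ∑ b, L (2 * j + 1) y b * Q y b) :=
      fun j hj => ContDiff.sum fun b _ =>
        (contDiff_pi.mp (hLsm j hj) b).mul (contDiff_pi.mp hQ b)
    have Hg : ∀ j, j < (m + 1) → HasDerivAt (fun s => ∑ b, L (2 * j + 1) (q s) b * Q (q s) b)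
        (∑ c, dS (fun y => ∑ b, L (2 * j + 1) y b * Q y b) c (q t) * w t c) t :=
      fun j hj => chain_rule _ q t (w t) (hdiffAt _ (hgsm j hj) _) (hqd t)
    have HG : HasDerivAt (fun s => G (q s)) (∑ c, dS G c (q t) * w t c) t :=
      chain_rule _ q t (w t) (hdiffAt _ hGsm _) (hqd t)
    have Hpow : ∀ j : ℕ, HasDerivAt (fun s : ℝ => s ^ (2 * (j + 1)) / ((2 * (j + 1) : ℕ) : ℝ))
        (t ^ (2 * j + 1)) t := by
      intro j
      have h := (hasDerivAt_pow (2 * (j + 1)) t).div_const ((2 * (j + 1) : ℕ) : ℝ)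
      refine h.congr_deriv ?_
      have he : 2 * (j + 1) - 1 = 2 * j + 1 := by omega
      rw [he]
      have hm : ((2 * (j + 1) : ℕ) : ℝ) ≠ 0 := by positivity
      field_simp
    have Hw : ∀ a : Fin n, HasDerivAt (fun s => w s a) (-(Q (q t) a)) t := hvd t
    have H1 := HasDerivAt.sum (fun (a : Fin n) (_ : a ∈ Finset.univ) =>
      HasDerivAt.sum (fun (b : Fin n) (_ : b ∈ Finset.univ) =>
        (((HC a b).sub (HasDerivAt.sum (fun j hj =>
          (Hpow j).mul (HS j (Finset.mem_range.mp hj) a b)))).mul (Hw a)).mul (Hw b)))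
    have H2 := HasDerivAt.sum (fun (j : ℕ) (hj : j ∈ Finset.range (m + 1)) =>
      (hasDerivAt_pow (2 * j + 1) t).mul
        (HasDerivAt.sum (fun (a : Fin n) (_ : a ∈ Finset.univ) =>
          (HL j (Finset.mem_range.mp hj) a).mul (Hw a))))
    have H3 := HasDerivAt.sum (fun (j : ℕ) (hj : j ∈ Finset.range (m + 1)) =>
      (Hpow j).mul (Hg j (Finset.mem_range.mp hj)))
    have Htot := ((H1.add H2).add H3).add HG
    convert Htot using 1
    case e'_4 => rfl
    case e'_5 => rfl
    case e'_8 =>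
      funext s
      simp only [Finset.sum_apply, Pi.add_apply, Pi.mul_apply, Pi.sub_apply]
    simp only [Finset.sum_apply, Pi.add_apply, Pi.mul_apply, Pi.sub_apply]
    -- abbreviations
    obtain ⟨W, hWdef⟩ : ∃ W : ℕ → ℝ, ∀ j, W j =
        ∑ a, ∑ b, SymJac (L (2 * j + 1)) (q t) a b * (w t a * w t b) := ⟨_, fun _ => rfl⟩
    obtain ⟨P, hPdef⟩ : ∃ P : ℕ → ℝ, ∀ j, P j =
        ∑ a, ∑ b, SymJac (L (2 * j + 1)) (q t) a b * Q (q t) b * w t a := ⟨_, fun _ => rfl⟩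
    obtain ⟨X, hXdef⟩ : ∃ X : ℕ → ℝ, ∀ j, X j =
        ∑ a, L (2 * j + 1) (q t) a * w t a := ⟨_, fun _ => rfl⟩
    obtain ⟨Y, hYdef⟩ : ∃ Y : ℕ → ℝ, ∀ j, Y j =
        ∑ a, L (2 * j + 1) (q t) a * Q (q t) a := ⟨_, fun _ => rfl⟩
    obtain ⟨cqw, hcqw⟩ : ∃ r : ℝ, r = ∑ a, ∑ b, C (q t) a b * Q (q t) b * w t a := ⟨_, rfl⟩
    symm
    -- piece 1 : dC triple sum vanishes (Killing tensor C)
    have piece1 : (∑ a, ∑ b, (∑ c, dS (fun y => C y a b) c (q t) * w t c) * (w t a * w t b)) = 0 := by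
      have hk := kill_zero (w t) (fun a b c => dS (fun y => C y a b) c (q t))
        (fun a b c => hC.2.2 (q t) a b c)
      rw [← hk]
      refine Finset.sum_congr rfl fun a _ => Finset.sum_congr rfl fun b _ => ?_
      rw [Finset.sum_mul]
      exact Finset.sum_congr rfl fun c _ => by ring
    -- piece 3 : dS triple sums vanish (Killing tensors S_j)
    have piece3 : ∀ j, j < m + 1 →
        (∑ a, ∑ b, (∑ c, dS (fun y => SymJac (L (2 * j + 1)) y a b) c (q t) * w t c)
          * (w t a * w t b)) = 0 := by
      intro j hj
      have hk := kill_zero (w t) (fun a b c => dS (fun y => SymJac (L (2 * j + 1)) y a b) c (q t))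
        (fun a b c => (hLKT j hj).2.2 (q t) a b c)
      rw [← hk]
      refine Finset.sum_congr rfl fun a _ => Finset.sum_congr rfl fun b _ => ?_
      rw [Finset.sum_mul]
      exact Finset.sum_congr rfl fun c _ => by ring
    -- symmetric-jacobian contraction identity
    have hJ : ∀ j, (∑ a, (∑ c, dS (fun y => L (2 * j + 1) y a) c (q t) * w t c) * w t a) = W j := by
      intro j
      have h1 : (∑ a, (∑ c, dS (fun y => L (2 * j + 1) y a) c (q t) * w t c) * w t a)
          = ∑ a, ∑ b, dS (fun y => L (2 * j + 1) y a) b (q t) * (w t a * w t b) := by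
        refine Finset.sum_congr rfl fun a _ => ?_
        rw [Finset.sum_mul]
        exact Finset.sum_congr rfl fun c _ => by ring
      have h2 : (∑ a, ∑ b, dS (fun y => L (2 * j + 1) y b) a (q t) * (w t a * w t b))
          = ∑ a, ∑ b, dS (fun y => L (2 * j + 1) y a) b (q t) * (w t a * w t b) := by
        rw [sum2_swap (fun a b => dS (fun y => L (2 * j + 1) y b) a (q t) * (w t a * w t b))]
        exact Finset.sum_congr rfl fun a _ => Finset.sum_congr rfl fun b _ => by ring
      rw [hWdef]
      simp only [SymJac]
      rw [h1]
      rw [show (∑ a, ∑ b, (1 / 2 : ℝ) * (dS (fun y => L (2 * j + 1) y a) b (q t)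
            + dS (fun y => L (2 * j + 1) y b) a (q t)) * (w t a * w t b))
          = (∑ a, ∑ b, (1/2 : ℝ) * (dS (fun y => L (2 * j + 1) y a) b (q t) * (w t a * w t b)))
            + ∑ a, ∑ b, (1/2 : ℝ) * (dS (fun y => L (2 * j + 1) y b) a (q t) * (w t a * w t b))
          from by
            rw [← Finset.sum_add_distrib]
            refine Finset.sum_congr rfl fun a _ => ?_
            rw [← Finset.sum_add_distrib]
            exact Finset.sum_congr rfl fun b _ => by ring]
      simp only [← Finset.mul_sum]
      rw [h2]
      ring
    -- Σ1 computation
    have hA : (∑ a, ∑ b,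
        (((∑ c, dS (fun y => C y a b) c (q t) * w t c -
            ∑ j ∈ Finset.range (m + 1),
              (t ^ (2 * j + 1) * SymJac (L (2 * j + 1)) (q t) a b +
                t ^ (2 * (j + 1)) / ((2 * (j + 1) : ℕ) : ℝ) *
                  ∑ c, dS (fun y => SymJac (L (2 * j + 1)) y a b) c (q t) * w t c)) * w t a +
          (C (q t) a b - ∑ j ∈ Finset.range (m + 1),
              t ^ (2 * (j + 1)) / ((2 * (j + 1) : ℕ) : ℝ) * SymJac (L (2 * j + 1)) (q t) a b)
            * -Q (q t) a) * w t b +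
        (C (q t) a b - ∑ j ∈ Finset.range (m + 1),
            t ^ (2 * (j + 1)) / ((2 * (j + 1) : ℕ) : ℝ) * SymJac (L (2 * j + 1)) (q t) a b)
          * w t a * -Q (q t) b))
        = -(∑ j ∈ Finset.range (m + 1), t ^ (2 * j + 1) * W j)
          + 2 * (∑ j ∈ Finset.range (m + 1),
              t ^ (2 * (j + 1)) / ((2 * (j + 1) : ℕ) : ℝ) * P j)
          - 2 * cqw := by
      have step1 : (∑ a, ∑ b,
          (((∑ c, dS (fun y => C y a b) c (q t) * w t c -
              ∑ j ∈ Finset.range (m + 1),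
                (t ^ (2 * j + 1) * SymJac (L (2 * j + 1)) (q t) a b +
                  t ^ (2 * (j + 1)) / ((2 * (j + 1) : ℕ) : ℝ) *
                    ∑ c, dS (fun y => SymJac (L (2 * j + 1)) y a b) c (q t) * w t c)) * w t a +
            (C (q t) a b - ∑ j ∈ Finset.range (m + 1),
                t ^ (2 * (j + 1)) / ((2 * (j + 1) : ℕ) : ℝ) * SymJac (L (2 * j + 1)) (q t) a b)
              * -Q (q t) a) * w t b +
          (C (q t) a b - ∑ j ∈ Finset.range (m + 1),
              t ^ (2 * (j + 1)) / ((2 * (j + 1) : ℕ) : ℝ) * SymJac (L (2 * j + 1)) (q t) a b)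
            * w t a * -Q (q t) b))
          = (∑ a, ∑ b, (∑ c, dS (fun y => C y a b) c (q t) * w t c) * (w t a * w t b))
            - (∑ a, ∑ b, (∑ j ∈ Finset.range (m + 1),
                t ^ (2 * j + 1) * SymJac (L (2 * j + 1)) (q t) a b) * (w t a * w t b))
            - (∑ a, ∑ b, (∑ j ∈ Finset.range (m + 1),
                t ^ (2 * (j + 1)) / ((2 * (j + 1) : ℕ) : ℝ) *
                  ∑ c, dS (fun y => SymJac (L (2 * j + 1)) y a b) c (q t) * w t c)
                * (w t a * w t b))
            - (∑ a, ∑ b, C (q t) a b * (Q (q t) a * w t b))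
            + (∑ a, ∑ b, (∑ j ∈ Finset.range (m + 1),
                t ^ (2 * (j + 1)) / ((2 * (j + 1) : ℕ) : ℝ) * SymJac (L (2 * j + 1)) (q t) a b)
                * (Q (q t) a * w t b))
            - (∑ a, ∑ b, C (q t) a b * (w t a * Q (q t) b))
            + (∑ a, ∑ b, (∑ j ∈ Finset.range (m + 1),
                t ^ (2 * (j + 1)) / ((2 * (j + 1) : ℕ) : ℝ) * SymJac (L (2 * j + 1)) (q t) a b)
                * (w t a * Q (q t) b)) := by
        simp only [← Finset.sum_add_distrib, ← Finset.sum_sub_distrib]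
        refine Finset.sum_congr rfl fun a _ => Finset.sum_congr rfl fun b _ => ?_
        rw [Finset.sum_add_distrib]
        ring
      rw [step1, piece1]
      have T1 : (∑ a, ∑ b, (∑ j ∈ Finset.range (m + 1),
          t ^ (2 * j + 1) * SymJac (L (2 * j + 1)) (q t) a b) * (w t a * w t b))
          = ∑ j ∈ Finset.range (m + 1), t ^ (2 * j + 1) * W j := by
        have e1 : (∑ a, ∑ b, (∑ j ∈ Finset.range (m + 1),
            t ^ (2 * j + 1) * SymJac (L (2 * j + 1)) (q t) a b) * (w t a * w t b))
            = ∑ a, ∑ b, ∑ j ∈ Finset.range (m + 1),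
                t ^ (2 * j + 1) * (SymJac (L (2 * j + 1)) (q t) a b * (w t a * w t b)) := by
          refine Finset.sum_congr rfl fun a _ => Finset.sum_congr rfl fun b _ => ?_
          rw [Finset.sum_mul]
          exact Finset.sum_congr rfl fun j _ => by ring
        rw [e1, sum_swap_out]
        refine Finset.sum_congr rfl fun j _ => ?_
        rw [hWdef]
        simp only [← Finset.mul_sum]
      have T3 : (∑ a, ∑ b, (∑ j ∈ Finset.range (m + 1),
          t ^ (2 * (j + 1)) / ((2 * (j + 1) : ℕ) : ℝ) *
            ∑ c, dS (fun y => SymJac (L (2 * j + 1)) y a b) c (q t) * w t c)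
          * (w t a * w t b)) = 0 := by
        have e1 : (∑ a, ∑ b, (∑ j ∈ Finset.range (m + 1),
            t ^ (2 * (j + 1)) / ((2 * (j + 1) : ℕ) : ℝ) *
              ∑ c, dS (fun y => SymJac (L (2 * j + 1)) y a b) c (q t) * w t c)
            * (w t a * w t b))
            = ∑ a, ∑ b, ∑ j ∈ Finset.range (m + 1),
                t ^ (2 * (j + 1)) / ((2 * (j + 1) : ℕ) : ℝ) *
                  ((∑ c, dS (fun y => SymJac (L (2 * j + 1)) y a b) c (q t) * w t c)
                    * (w t a * w t b)) := by
          refine Finset.sum_congr rfl fun a _ => Finset.sum_congr rfl fun b _ => ?_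
          rw [Finset.sum_mul]
          exact Finset.sum_congr rfl fun j _ => by ring
        rw [e1, sum_swap_out]
        refine Finset.sum_eq_zero fun j hj => ?_
        simp only [← Finset.mul_sum]
        rw [piece3 j (Finset.mem_range.mp hj), mul_zero]
      have T4 : (∑ a, ∑ b, C (q t) a b * (Q (q t) a * w t b)) = cqw := by
        rw [sum2_swap (fun a b => C (q t) a b * (Q (q t) a * w t b)), hcqw]
        refine Finset.sum_congr rfl fun a _ => Finset.sum_congr rfl fun b _ => ?_
        rw [hC.2.1 (q t) b a]
        ring
      have T6 : (∑ a, ∑ b, C (q t) a b * (w t a * Q (q t) b)) = cqw := by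
        rw [hcqw]
        exact Finset.sum_congr rfl fun a _ => Finset.sum_congr rfl fun b _ => by ring
      have T5 : (∑ a, ∑ b, (∑ j ∈ Finset.range (m + 1),
          t ^ (2 * (j + 1)) / ((2 * (j + 1) : ℕ) : ℝ) * SymJac (L (2 * j + 1)) (q t) a b)
          * (Q (q t) a * w t b))
          = ∑ j ∈ Finset.range (m + 1), t ^ (2 * (j + 1)) / ((2 * (j + 1) : ℕ) : ℝ) * P j := by
        have e1 : (∑ a, ∑ b, (∑ j ∈ Finset.range (m + 1),
            t ^ (2 * (j + 1)) / ((2 * (j + 1) : ℕ) : ℝ) * SymJac (L (2 * j + 1)) (q t) a b)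
            * (Q (q t) a * w t b))
            = ∑ a, ∑ b, ∑ j ∈ Finset.range (m + 1),
                t ^ (2 * (j + 1)) / ((2 * (j + 1) : ℕ) : ℝ) *
                  (SymJac (L (2 * j + 1)) (q t) a b * (Q (q t) a * w t b)) := by
          refine Finset.sum_congr rfl fun a _ => Finset.sum_congr rfl fun b _ => ?_
          rw [Finset.sum_mul]
          exact Finset.sum_congr rfl fun j _ => by ring
        rw [e1, sum_swap_out]
        refine Finset.sum_congr rfl fun j hj => ?_
        simp only [← Finset.mul_sum]
        congr 1
        rw [hPdef, sum2_swap (fun a b =>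
          SymJac (L (2 * j + 1)) (q t) a b * (Q (q t) a * w t b))]
        refine Finset.sum_congr rfl fun a _ => Finset.sum_congr rfl fun b _ => ?_
        rw [(hLKT j (Finset.mem_range.mp hj)).2.1 (q t) b a]
        ring
      have T7 : (∑ a, ∑ b, (∑ j ∈ Finset.range (m + 1),
          t ^ (2 * (j + 1)) / ((2 * (j + 1) : ℕ) : ℝ) * SymJac (L (2 * j + 1)) (q t) a b)
          * (w t a * Q (q t) b))
          = ∑ j ∈ Finset.range (m + 1), t ^ (2 * (j + 1)) / ((2 * (j + 1) : ℕ) : ℝ) * P j := by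
        have e1 : (∑ a, ∑ b, (∑ j ∈ Finset.range (m + 1),
            t ^ (2 * (j + 1)) / ((2 * (j + 1) : ℕ) : ℝ) * SymJac (L (2 * j + 1)) (q t) a b)
            * (w t a * Q (q t) b))
            = ∑ a, ∑ b, ∑ j ∈ Finset.range (m + 1),
                t ^ (2 * (j + 1)) / ((2 * (j + 1) : ℕ) : ℝ) *
                  (SymJac (L (2 * j + 1)) (q t) a b * Q (q t) b * w t a) := by
          refine Finset.sum_congr rfl fun a _ => Finset.sum_congr rfl fun b _ => ?_
          rw [Finset.sum_mul]
          exact Finset.sum_congr rfl fun j _ => by ring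
        rw [e1, sum_swap_out]
        refine Finset.sum_congr rfl fun j hj => ?_
        simp only [← Finset.mul_sum]
        rw [hPdef]
      rw [T1, T3, T4, T5, T6, T7]
      ring
    -- Σ2 computation
    have hB : (∑ j ∈ Finset.range (m + 1),
        (((2 * j + 1 : ℕ) : ℝ) * t ^ (2 * j + 1 - 1) * ∑ a, L (2 * j + 1) (q t) a * w t a +
          t ^ (2 * j + 1) * ∑ a,
            ((∑ c, dS (fun y => L (2 * j + 1) y a) c (q t) * w t c) * w t a +
              L (2 * j + 1) (q t) a * -Q (q t) a)))
        = (∑ j ∈ Finset.range (m + 1), ((2 * j + 1 : ℕ) : ℝ) * t ^ (2 * j) * X j)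
          + (∑ j ∈ Finset.range (m + 1), t ^ (2 * j + 1) * W j)
          - (∑ j ∈ Finset.range (m + 1), t ^ (2 * j + 1) * Y j) := by
      simp only [← Finset.sum_add_distrib, ← Finset.sum_sub_distrib]
      refine Finset.sum_congr rfl fun j _ => ?_
      have einner : (∑ a : Fin n,
          ((∑ c, dS (fun y => L (2 * j + 1) y a) c (q t) * w t c) * w t a +
            L (2 * j + 1) (q t) a * -Q (q t) a))
          = W j - Y j := by
        rw [Finset.sum_add_distrib]
        rw [hJ j]
        congr 1
        rw [hYdef, ← Finset.sum_neg_distrib]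
        exact Finset.sum_congr rfl fun a _ => by ring
      rw [einner, ← hXdef]
      have : 2 * j + 1 - 1 = 2 * j := by omega
      rw [this]
      ring
    -- Σ3 computation
    have hDgmid : ∀ j, j < m →
        (∑ c, dS (fun y => ∑ b, L (2 * j + 1) y b * Q y b) c (q t) * w t c)
          = -2 * P j - (((2 * j + 2) * (2 * j + 3) : ℕ) : ℝ) * X (j + 1) := by
      intro j hj
      have hk : Even (2 * j + 2) := ⟨j + 1, by ring⟩
      have h1 := fun c => hmid (2 * j + 2) hk (by omega) (by omega) (q t) c
      simp only [show 2 * j + 2 - 1 = 2 * j + 1 from by omega,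
        show 2 * j + 2 + 1 = 2 * j + 3 from by omega] at h1
      have hX' : X (j + 1) = ∑ a, L (2 * j + 3) (q t) a * w t a := by
        rw [hXdef]
        have e : 2 * (j + 1) + 1 = 2 * j + 3 := by omega
        rw [e]
      have hP2 : (∑ c, (∑ b, SymJac (L (2 * j + 1)) (q t) c b * Q (q t) b) * w t c) = P j := by
        rw [hPdef]
        refine Finset.sum_congr rfl fun c _ => ?_
        rw [Finset.sum_mul]
      calc (∑ c, dS (fun y => ∑ b, L (2 * j + 1) y b * Q y b) c (q t) * w t c)
          = ∑ c, ((-2 : ℝ) * ((∑ b, SymJac (L (2 * j + 1)) (q t) c b * Q (q t) b) * w t c)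
              - (((2 * j + 2) * (2 * j + 3) : ℕ) : ℝ) * (L (2 * j + 3) (q t) c * w t c)) := by
            refine Finset.sum_congr rfl fun c _ => ?_
            rw [h1 c]
            ring
        _ = (-2 : ℝ) * (∑ c, (∑ b, SymJac (L (2 * j + 1)) (q t) c b * Q (q t) b) * w t c)
              - (((2 * j + 2) * (2 * j + 3) : ℕ) : ℝ) * (∑ c, L (2 * j + 3) (q t) c * w t c) := by
            rw [Finset.sum_sub_distrib, ← Finset.mul_sum, ← Finset.mul_sum]
        _ = -2 * P j - (((2 * j + 2) * (2 * j + 3) : ℕ) : ℝ) * X (j + 1) := by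
            rw [hP2, hX']
    have hDgtop :
        (∑ c, dS (fun y => ∑ b, L (2 * m + 1) y b * Q y b) c (q t) * w t c) = -2 * P m := by
      have h1 := fun c => htop (q t) c
      simp only [show 2 * (m + 1) - 1 = 2 * m + 1 from by omega] at h1
      have hP2 : (∑ c, (∑ b, SymJac (L (2 * m + 1)) (q t) c b * Q (q t) b) * w t c) = P m := by
        rw [hPdef]
        refine Finset.sum_congr rfl fun c _ => ?_
        rw [Finset.sum_mul]
      calc (∑ c, dS (fun y => ∑ b, L (2 * m + 1) y b * Q y b) c (q t) * w t c)
          = ∑ c, ((-2 : ℝ) * ((∑ b, SymJac (L (2 * m + 1)) (q t) c b * Q (q t) b) * w t c)) := by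
            refine Finset.sum_congr rfl fun c _ => ?_
            rw [h1 c]
            ring
        _ = (-2 : ℝ) * (∑ c, (∑ b, SymJac (L (2 * m + 1)) (q t) c b * Q (q t) b) * w t c) := by
            rw [← Finset.mul_sum]
        _ = -2 * P m := by rw [hP2]
    have hC3 : (∑ j ∈ Finset.range (m + 1),
        (t ^ (2 * j + 1) * ∑ b, L (2 * j + 1) (q t) b * Q (q t) b +
          t ^ (2 * (j + 1)) / ((2 * (j + 1) : ℕ) : ℝ) *
            ∑ c, dS (fun y => ∑ b, L (2 * j + 1) y b * Q y b) c (q t) * w t c))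
        = (∑ j ∈ Finset.range (m + 1), t ^ (2 * j + 1) * Y j)
          - 2 * (∑ j ∈ Finset.range (m + 1),
              t ^ (2 * (j + 1)) / ((2 * (j + 1) : ℕ) : ℝ) * P j)
          - (∑ j ∈ Finset.range m, ((2 * j + 3 : ℕ) : ℝ) * t ^ (2 * j + 2) * X (j + 1)) := by
      rw [Finset.sum_range_succ, Finset.sum_range_succ
        (fun j => t ^ (2 * j + 1) * Y j), Finset.sum_range_succ
        (fun j => t ^ (2 * (j + 1)) / ((2 * (j + 1) : ℕ) : ℝ) * P j)]
      rw [hDgtop]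
      have hmain : (∑ j ∈ Finset.range m,
          (t ^ (2 * j + 1) * ∑ b, L (2 * j + 1) (q t) b * Q (q t) b +
            t ^ (2 * (j + 1)) / ((2 * (j + 1) : ℕ) : ℝ) *
              ∑ c, dS (fun y => ∑ b, L (2 * j + 1) y b * Q y b) c (q t) * w t c))
          = (∑ j ∈ Finset.range m, t ^ (2 * j + 1) * Y j)
            - 2 * (∑ j ∈ Finset.range m,
                t ^ (2 * (j + 1)) / ((2 * (j + 1) : ℕ) : ℝ) * P j)
            - (∑ j ∈ Finset.range m, ((2 * j + 3 : ℕ) : ℝ) * t ^ (2 * j + 2) * X (j + 1)) := by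
        calc (∑ j ∈ Finset.range m,
            (t ^ (2 * j + 1) * ∑ b, L (2 * j + 1) (q t) b * Q (q t) b +
              t ^ (2 * (j + 1)) / ((2 * (j + 1) : ℕ) : ℝ) *
                ∑ c, dS (fun y => ∑ b, L (2 * j + 1) y b * Q y b) c (q t) * w t c))
            = ∑ j ∈ Finset.range m,
                (t ^ (2 * j + 1) * Y j
                  - 2 * (t ^ (2 * (j + 1)) / ((2 * (j + 1) : ℕ) : ℝ) * P j)
                  - ((2 * j + 3 : ℕ) : ℝ) * t ^ (2 * j + 2) * X (j + 1)) := by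
              refine Finset.sum_congr rfl fun j hj => ?_
              rw [hDgmid j (Finset.mem_range.mp hj), ← hYdef]
              have hcast : t ^ (2 * (j + 1)) / ((2 * (j + 1) : ℕ) : ℝ) *
                  ((((2 * j + 2) * (2 * j + 3) : ℕ) : ℝ) * X (j + 1))
                  = ((2 * j + 3 : ℕ) : ℝ) * t ^ (2 * j + 2) * X (j + 1) := by
                have hne : ((2 * (j + 1) : ℕ) : ℝ) ≠ 0 := by positivity
                have hexp : 2 * (j + 1) = 2 * j + 2 := by omega
                rw [hexp]
                push_cast
                field_simp
              rw [mul_sub, hcast]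
              ring
          _ = (∑ j ∈ Finset.range m, t ^ (2 * j + 1) * Y j)
              - 2 * (∑ j ∈ Finset.range m,
                  t ^ (2 * (j + 1)) / ((2 * (j + 1) : ℕ) : ℝ) * P j)
              - (∑ j ∈ Finset.range m, ((2 * j + 3 : ℕ) : ℝ) * t ^ (2 * j + 2) * X (j + 1)) := by
              rw [Finset.sum_sub_distrib, Finset.sum_sub_distrib, ← Finset.mul_sum]
      rw [hmain, ← hYdef m]
      ring
    -- Σ4 computation
    have hD4 : (∑ c, dS G c (q t) * w t c) = 2 * cqw - X 0 := by
      have hX0 : X 0 = ∑ a, L 1 (q t) a * w t a := by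
        rw [hXdef]
      calc (∑ c, dS G c (q t) * w t c)
          = ∑ c, (2 * ((∑ b, C (q t) c b * Q (q t) b) * w t c) - L 1 (q t) c * w t c) := by
            refine Finset.sum_congr rfl fun c _ => ?_
            rw [hG (q t) c]
            ring
        _ = 2 * (∑ c, (∑ b, C (q t) c b * Q (q t) b) * w t c) - ∑ c, L 1 (q t) c * w t c := by
            rw [Finset.sum_sub_distrib, ← Finset.mul_sum]
        _ = 2 * cqw - X 0 := by
            have hfold : (∑ c, (∑ b, C (q t) c b * Q (q t) b) * w t c)
                = ∑ a, ∑ b, C (q t) a b * Q (q t) b * w t a :=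
              Finset.sum_congr rfl fun c _ => by rw [Finset.sum_mul]
            rw [hfold, ← hcqw, ← hX0]
    -- telescoping identity
    have hT : (∑ j ∈ Finset.range (m + 1), ((2 * j + 1 : ℕ) : ℝ) * t ^ (2 * j) * X j)
        = (∑ j ∈ Finset.range m, ((2 * j + 3 : ℕ) : ℝ) * t ^ (2 * j + 2) * X (j + 1)) + X 0 := by
      rw [Finset.sum_range_succ' (fun j => ((2 * j + 1 : ℕ) : ℝ) * t ^ (2 * j) * X j) m]
      have e0 : ((2 * 0 + 1 : ℕ) : ℝ) * t ^ (2 * 0) * X 0 = X 0 := by norm_num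
      rw [e0]
      have esum : (∑ j ∈ Finset.range m,
          ((2 * (j + 1) + 1 : ℕ) : ℝ) * t ^ (2 * (j + 1)) * X (j + 1))
          = ∑ j ∈ Finset.range m, ((2 * j + 3 : ℕ) : ℝ) * t ^ (2 * j + 2) * X (j + 1) :=
        Finset.sum_congr rfl fun j _ => by push_cast; ring
      rw [esum]
    rw [hA, hB, hC3, hD4, hT]
    ring
  refine ⟨(fun s : ℝ =>
      (∑ a, ∑ b,
          (C (q s) a b -
            ∑ j ∈ Finset.range (m + 1),
              (s ^ (2 * (j + 1)) / ((2 * (j + 1) : ℕ) : ℝ)) * SymJac (L (2 * j + 1)) (q s) a b)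
          * w s a * w s b)
        + (∑ j ∈ Finset.range (m + 1),
            s ^ (2 * j + 1) * ∑ a, L (2 * j + 1) (q s) a * w s a)
        + (∑ j ∈ Finset.range (m + 1),
            (s ^ (2 * (j + 1)) / ((2 * (j + 1) : ℕ) : ℝ)) *
              ∑ a, L (2 * j + 1) (q s) a * Q (q s) a)
        + G (q s)) 0, fun t => ?_⟩
  simp only [← hw]
  exact is_const_of_deriv_eq_zero (fun s => (key s).differentiableAt)
    (fun s => (key s).deriv) t 0
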